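/- arXiv:1005.5534 — 5 statements merged into one kernel-verified Lean document; each statement's English description precedes it below -/
import Mathlib

section
/- For any countable ordinal ξ, every subset C of the set 2^ξ of binary sequences of length ξ is countably cofinal with respect to the lexicographic order; that is, there exists an at most countable subset C' ⊆ C such that for every s ∈ C there is t ∈ C' with s ≤_lex t. -/
/-!
Over a well-ordered index type, the lexicographic supremum `b` of `C ⊆ 2^ι` is built by
transfinite recursion: `b i = true` iff some `s ∈ C` agreeing with `b` below `i` has `s i = true`.
Every `s ∈ C` lies below `b`, and if `s < b` differ first at `i`, then `b i = true`, so the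
recursion supplies a `t ∈ C` agreeing with `b` up to and including `i`, and `s < t`. Choosing one
such `t` for each of the countably many `i`, and adding `b` itself if it lies in `C`, gives a
countable cofinal subset.
-/

open Cardinal

/-- The lexicographic (non-strict) order on binary sequences of length `ξ`:
`s ≤lex t` iff `s = t` or at the least point `η` of disagreement `s η = false < true = t η`. -/
def lexLE {ξ : Ordinal} (s t : {η : Ordinal // η < ξ} → Bool) : Prop :=
  s = t ∨ ∃ η, (∀ ζ, ζ < η → s ζ = t ζ) ∧ s η = false ∧ t η = true

namespace Pi.Lex

variable {ι : Type*} [LinearOrder ι] [WellFoundedLT ι]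

open scoped Classical in
noncomputable def supBranch (C : Set (ι → Bool)) : ι → Bool :=
  wellFounded_lt.fix fun i b => decide (∃ s ∈ C, (∀ j (h : j < i), s j = b j h) ∧ s i = true)

theorem supBranch_eq_true_iff (C : Set (ι → Bool)) (i : ι) :
    supBranch C i = true ↔ ∃ s ∈ C, (∀ j < i, s j = supBranch C j) ∧ s i = true := by
  classical
  rw [supBranch, wellFounded_lt.fix_eq, decide_eq_true_iff]

theorem toLex_le_supBranch {C : Set (ι → Bool)} {s : ι → Bool} (hs : s ∈ C) :
    toLex s ≤ toLex (supBranch C) := by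
  by_contra! hlt
  obtain ⟨i, hagree, hi⟩ := hlt
  obtain ⟨hb, hs_i⟩ := Bool.lt_iff.mp hi
  have hb' : supBranch C i = true :=
    (supBranch_eq_true_iff C i).mpr ⟨s, hs, fun j hj => (hagree j hj).symm, hs_i⟩
  exact Bool.false_ne_true (hb ▸ hb')

theorem exists_countable_cofinal [Countable ι] (C : Set (ι → Bool)) :
    ∃ C' ⊆ C, C'.Countable ∧ ∀ s ∈ C, ∃ t ∈ C', toLex s ≤ toLex t := by
  set b := supBranch C
  choose t htC hagree ht_true using fun i : {i // b i = true} =>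
    (supBranch_eq_true_iff C i).mp i.2
  refine ⟨C ∩ {b} ∪ Set.range t, ?_, ?_, fun s hs => ?_⟩
  · rintro _ (⟨hC, -⟩ | ⟨i, rfl⟩)
    exacts [hC, htC i]
  · exact ((Set.countable_singleton b).mono Set.inter_subset_right).union (Set.countable_range t)
  · rcases (toLex_le_supBranch hs).eq_or_lt with heq | ⟨i, hsb, hi⟩
    · exact ⟨s, .inl ⟨hs, toLex_inj.mp heq⟩, le_rfl⟩
    · obtain ⟨hs_i, hb_i⟩ := Bool.lt_iff.mp hi
      refine ⟨t ⟨i, hb_i⟩, .inr ⟨_, rfl⟩, le_of_lt ⟨i, fun j hj => ?_, ?_⟩⟩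
      · exact (hsb j hj).trans (hagree _ j hj).symm
      · exact Bool.lt_iff.mpr ⟨hs_i, ht_true _⟩

end Pi.Lex

theorem lexLE_iff_toLex_le {ξ : Ordinal} {s t : {η : Ordinal // η < ξ} → Bool} :
    lexLE s t ↔ toLex s ≤ toLex t := by
  simp only [lexLE, le_iff_eq_or_lt, toLex_inj]
  exact or_congr_right <| exists_congr fun η => and_congr_right fun _ => Bool.lt_iff.symm

theorem countable_Iio_ordinal {ξ : Ordinal} (hξ : ξ.card ≤ aleph0) :
    Countable {η : Ordinal // η < ξ} := by
  rw [← mk_le_aleph0_iff]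
  change #(Set.Iio ξ) ≤ aleph0
  rw [mk_Iio_ordinal]
  exact lift_le_aleph0.mpr hξ

/-- For any countable ordinal `ξ`, every subset `C` of `2^ξ` is countably cofinal
with respect to the lexicographic order. -/
theorem lex_countably_cofinal (ξ : Ordinal) (hξ : ξ.card ≤ aleph0)
    (C : Set ({η : Ordinal // η < ξ} → Bool)) :
    ∃ C' ⊆ C, C'.Countable ∧ ∀ s ∈ C, ∃ t ∈ C', lexLE s t := by
  have := countable_Iio_ordinal hξ
  simpa only [lexLE_iff_toLex_le] using Pi.Lex.exists_countable_cofinal C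
end

section
/- For any countable ordinal ξ, every strictly increasing (with respect to the lexicographic order) transfinite sequence of elements of 2^ξ indexed by ordinals has countable length; equivalently, there is no strictly ≤_lex-increasing ω₁-sequence in 2^ξ. -/
open Cardinal Ordinal

/-- The strict lexicographic order on binary sequences of length `ξ`. -/
def lexLT {ξ : Ordinal} (s t : {η : Ordinal // η < ξ} → Bool) : Prop :=
  lexLE s t ∧ s ≠ t

lemma lexLT_witness {ξ : Ordinal} {s t : {η : Ordinal // η < ξ} → Bool} (h : lexLT s t) :
    ∃ η, (∀ ζ, ζ < η → s ζ = t ζ) ∧ s η = false ∧ t η = true := by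
  obtain ⟨h1, h2⟩ := h
  rcases h1 with rfl | hw
  · exact absurd rfl h2
  · exact hw

lemma lexLT_of_witness {ξ : Ordinal} {s t : {η : Ordinal // η < ξ} → Bool} (η : {η : Ordinal // η < ξ})
    (h1 : ∀ ζ, ζ < η → s ζ = t ζ) (h2 : s η = false) (h3 : t η = true) : lexLT s t := by
  refine ⟨Or.inr ⟨η, h1, h2, h3⟩, fun he => ?_⟩
  rw [he, h3] at h2; exact Bool.noConfusion h2

lemma lexLT_asymm {ξ : Ordinal} {s t : {η : Ordinal // η < ξ} → Bool}
    (h : lexLT s t) (h' : lexLT t s) : False := by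
  obtain ⟨η, ha, hs, ht⟩ := lexLT_witness h
  obtain ⟨η', hb, hs', ht'⟩ := lexLT_witness h'
  rcases lt_trichotomy η η' with hlt | rfl | hlt
  · have := hb η hlt; rw [hs, ht] at this; exact Bool.noConfusion this
  · rw [hs] at ht'; exact Bool.noConfusion ht'
  · have := ha η' hlt; rw [hs', ht'] at this; exact Bool.noConfusion this

lemma key : ∀ ξ : Ordinal, ξ.card ≤ ℵ₀ →
    ∀ (f : {o : Ordinal // o < ω₁} → ({η : Ordinal // η < ξ} → Bool))
      (A : Set {o : Ordinal // o < ω₁}),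
      (∀ α β, α ∈ A → β ∈ A → α < β → lexLT (f α) (f β)) → A.Countable := by
  intro ξ
  induction ξ using Ordinal.induction with
  | h ξ IH =>
  intro hξ f A hmono
  classical
  -- the set of maximal elements of A
  set M : Set {o : Ordinal // o < ω₁} := {α ∈ A | ∀ β ∈ A, ¬ α < β} with hM
  have hMc : M.Countable := by
    apply Set.Subsingleton.countable
    intro a ha b hb
    by_contra hne
    rcases lt_or_gt_of_ne hne with h | h
    · exact ha.2 b hb.1 h
    · exact hb.2 a ha.1 h
  -- the property: η is the canonical splitting point of α (w.r.t. its successor in A)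
  set P : {o : Ordinal // o < ω₁} → {η : Ordinal // η < ξ} → Prop := fun α η =>
    ∃ β, β ∈ A ∧ α < β ∧ (∀ γ ∈ A, α < γ → β ≤ γ) ∧
      (∀ ζ, ζ < η → f α ζ = f β ζ) ∧ f α η = false ∧ f β η = true with hP
  have hPex : ∀ α ∈ A, α ∉ M → ∃ η, P α η := by
    intro α hα hαM
    have hne : {β | β ∈ A ∧ α < β}.Nonempty := by
      by_contra hempty
      rw [Set.not_nonempty_iff_eq_empty] at hempty
      apply hαM
      refine ⟨hα, fun β hβ hlt => ?_⟩
      have : β ∈ {β | β ∈ A ∧ α < β} := ⟨hβ, hlt⟩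
      rw [hempty] at this; exact this
    obtain ⟨β, hβmem, hβmin⟩ := wellFounded_lt.has_min _ hne
    obtain ⟨η, h1, h2, h3⟩ := lexLT_witness (hmono α β hα hβmem.1 hβmem.2)
    exact ⟨η, β, hβmem.1, hβmem.2,
      fun γ hγ hlt => not_lt.mp (hβmin γ ⟨hγ, hlt⟩), h1, h2, h3⟩
  set S : {η : Ordinal // η < ξ} → Set {o : Ordinal // o < ω₁} := fun η => {α ∈ A | P α η}
    with hS
  -- the index type is countable
  have hcnt : Countable {η : Ordinal // η < ξ} := by
    rw [← mk_le_aleph0_iff]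
    have : #{η : Ordinal // η < ξ} = #(Set.Iio ξ) := rfl
    rw [this, Ordinal.mk_Iio_ordinal]
    exact lift_le_aleph0.mpr hξ
  -- each S η is countable by the inductive hypothesis
  have hSc : ∀ η, (S η).Countable := by
    intro η
    refine IH η.1 η.2 ?_ ?_ (S η) ?_
    · exact le_trans (Ordinal.card_le_card η.2.le) hξ
    · exact fun α ζ => f α ⟨ζ.1, ζ.2.trans η.2⟩
    · rintro α β ⟨hαA, hPα⟩ ⟨hβA, hPβ⟩ hab
      obtain ⟨ζ₀, hw1, hw2, hw3⟩ := lexLT_witness (hmono α β hαA hβA hab)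
      obtain ⟨β₁, hβ₁A, hαβ₁, hβ₁min, ha1, ha2, ha3⟩ := hPα
      obtain ⟨β₂, hβ₂A, hββ₂, hβ₂min, hb1, hb2, hb3⟩ := hPβ
      rcases lt_trichotomy ζ₀ η with hlt | rfl | hlt
      · -- ζ₀ < η : restrict the witness
        refine lexLT_of_witness ⟨ζ₀.1, Subtype.coe_lt_coe.mpr hlt⟩ ?_ ?_ ?_
        · rintro ⟨ζ, hζ⟩ hζlt
          exact hw1 ⟨ζ, hζ.trans η.2⟩ hζlt
        · exact hw2
        · exact hw3
      · -- ζ₀ = η : then f β η = true, contradicting hb2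
        rw [hw3] at hb2; exact Bool.noConfusion hb2
      · -- η < ζ₀ : contradiction via minimality of β₁
        exfalso
        have hfβη : f β η = false := by rw [← hw1 η hlt]; exact ha2
        have hβ₁β : β₁ ≤ β := hβ₁min β hβA hab
        rcases eq_or_lt_of_le hβ₁β with rfl | hβ₁ltβ
        · rw [ha3] at hfβη; exact Bool.noConfusion hfβη
        · refine lexLT_asymm (hmono β₁ β hβ₁A hβA hβ₁ltβ) ?_
          refine lexLT_of_witness η (fun ζ hζ => ?_) hfβη ha3
          rw [← hw1 ζ (hζ.trans hlt), ha1 ζ hζ]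
  -- A is covered by M and the S η
  have hcov : A ⊆ M ∪ ⋃ η, S η := by
    intro α hα
    by_cases hm : α ∈ M
    · exact Or.inl hm
    · obtain ⟨η, hη⟩ := hPex α hα hm
      exact Or.inr (Set.mem_iUnion.mpr ⟨η, hα, hη⟩)
  exact Set.Countable.mono hcov (hMc.union (Set.countable_iUnion hSc))

/-- For any countable ordinal `ξ`, there is no strictly `≤lex`-increasing
`ω₁`-sequence in `2^ξ`. -/
theorem no_omega1_increasing_lex_sequence (ξ : Ordinal) (hξ : ξ.card ≤ aleph0) :
    ¬ ∃ f : {o : Ordinal // o < ω₁} → ({η : Ordinal // η < ξ} → Bool),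
      ∀ α β, α < β → lexLT (f α) (f β) := by
  rintro ⟨f, hf⟩
  have hA : (Set.univ : Set {o : Ordinal // o < ω₁}).Countable :=
    key ξ hξ f Set.univ (fun α β _ _ h => hf α β h)
  have : Countable {o : Ordinal // o < ω₁} := Set.countable_univ_iff.mp hA
  have h1 : #{o : Ordinal // o < ω₁} ≤ ℵ₀ := mk_le_aleph0_iff.mpr this
  have h2 : #{o : Ordinal // o < ω₁} = #(Set.Iio (ω₁ : Ordinal)) := rfl
  rw [h2, Ordinal.mk_Iio_ordinal] at h1
  have h3 : (ω₁ : Ordinal).card ≤ ℵ₀ := lift_le_aleph0.mp h1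
  simp at h3
end

section
/- If A ⊆ 2^{<ω₁} is an antichain and for some fixed countable ordinal ξ₀ the set A_{ξ₀} = A ∩ 2^{ξ₀} is ≤_lex-cofinal in A, then A is countably cofinal under ≤_lex: there is an at most countable A' ⊆ A that is ≤_lex-cofinal in A. -/
open Cardinal Ordinal

/-- A transfinite binary sequence of countable length: an element of `2^{<ω₁}`. -/
structure BSeq where
  len : Ordinal.{0}
  len_countable : len.card ≤ Cardinal.aleph0
  val : ∀ η : Ordinal.{0}, η < len → Bool

/-- `t` properly extends `s`, i.e. `s` is a proper initial segment of `t`. -/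
def BSeq.ExtendedBy (s t : BSeq) : Prop :=
  ∃ h : s.len < t.len, ∀ η (hη : η < s.len), s.val η hη = t.val η (hη.trans h)

/-- The lexicographic order on `2^{<ω₁}`: `s ≤lex t` iff `s = t`, or neither is a proper
initial segment of the other and at the least point of disagreement `s` has value
`false` and `t` has value `true`. -/
def BSeq.lexLE (s t : BSeq) : Prop :=
  s = t ∨ (¬ s.ExtendedBy t ∧ ¬ t.ExtendedBy s ∧
    ∃ η, ∃ hs : η < s.len, ∃ ht : η < t.len,
      (∀ ζ (hζs : ζ < s.len) (hζt : ζ < t.len), ζ < η → s.val ζ hζs = t.val ζ hζt) ∧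
      s.val η hs = false ∧ t.val η ht = true)

/-- The strict lexicographic order on `2^{<ω₁}`. -/
def BSeq.lexLT (s t : BSeq) : Prop := s.lexLE t ∧ s ≠ t

/-- An antichain in `2^{<ω₁}`: no element is a proper initial segment of another. -/
def IsSeqAntichain (A : Set BSeq) : Prop :=
  ∀ s ∈ A, ∀ t ∈ A, ¬ s.ExtendedBy t

/-!
Only the elements of `A` of length `ξ₀` matter, since they are cofinal. Among sequences of the
fixed countable length `ξ₀`, follow the rightmost branch `u`: `u η = true` exactly when some
sequence agreeing with `u` below `η` takes the value `true` at `η`. For each `η < ξ₀` where this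
happens, pick one such witness. A sequence of length `ξ₀` is either `u` itself, or at its first
disagreement with `u` it takes the value `false` where `u` takes `true`, so it lies
lexicographically below every witness at that point. Hence the countably many witnesses,
together with `u` if it occurs, are cofinal.
-/

namespace BSeq

theorem ext_of_len_eq {s t : BSeq} (hlen : s.len = t.len)
    (hval : ∀ η (hs : η < s.len) (ht : η < t.len), s.val η hs = t.val η ht) : s = t := by
  obtain ⟨l, c, v⟩ := s
  obtain ⟨l', c', v'⟩ := t
  subst hlen
  simp only [BSeq.mk.injEq, heq_eq_eq, true_and]
  funext η h
  exact hval η h h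

theorem not_extendedBy_of_val_ne {s t : BSeq} {η : Ordinal} (hs : η < s.len) (ht : η < t.len)
    (h : s.val η hs ≠ t.val η ht) : ¬ s.ExtendedBy t :=
  fun ⟨_, hval⟩ => h (hval η hs)

theorem lexLE_of_val_false_true {s t : BSeq} {η : Ordinal} (hs : η < s.len) (ht : η < t.len)
    (hagree : ∀ ζ (hζs : ζ < s.len) (hζt : ζ < t.len), ζ < η → s.val ζ hζs = t.val ζ hζt)
    (hsη : s.val η hs = false) (htη : t.val η ht = true) : s.lexLE t := by
  have hne : s.val η hs ≠ t.val η ht := by simp [hsη, htη]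
  exact Or.inr ⟨not_extendedBy_of_val_ne hs ht hne, not_extendedBy_of_val_ne ht hs hne.symm,
    η, hs, ht, hagree, hsη, htη⟩

theorem lexLE_trans {a b c : BSeq} (hab : a.lexLE b) (hbc : b.lexLE c) : a.lexLE c := by
  rcases hab with rfl | ⟨-, -, η₁, ha₁, hb₁, hab₁, haη₁, hbη₁⟩
  · exact hbc
  rcases hbc with rfl | ⟨-, -, η₂, hb₂, hc₂, hbc₂, hbη₂, hcη₂⟩
  · exact lexLE_of_val_false_true ha₁ hb₁ hab₁ haη₁ hbη₁
  rcases lt_trichotomy η₁ η₂ with hlt | rfl | hlt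
  · have hc₁ : η₁ < c.len := hlt.trans hc₂
    refine lexLE_of_val_false_true ha₁ hc₁ (fun ζ hζa hζc hζ => ?_) haη₁ ?_
    · have hζb : ζ < b.len := hζ.trans hb₁
      rw [hab₁ ζ hζa hζb hζ, hbc₂ ζ hζb hζc (hζ.trans hlt)]
    · rw [← hbc₂ η₁ hb₁ hc₁ hlt, hbη₁]
  · simp [hbη₁] at hbη₂
  · have ha₂ : η₂ < a.len := hlt.trans ha₁
    refine lexLE_of_val_false_true ha₂ hc₂ (fun ζ hζa hζc hζ => ?_) ?_ hcη₂
    · have hζb : ζ < b.len := hζ.trans hb₂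
      rw [hab₁ ζ hζa hζb (hζ.trans hlt), hbc₂ ζ hζb hζc hζ]
    · rw [hab₁ η₂ ha₂ hb₂ hlt, hbη₂]

def AgreesBelow (t : BSeq) (f : Ordinal.{0} → Bool) (η : Ordinal.{0}) : Prop :=
  ∀ ζ (h : ζ < t.len), ζ < η → t.val ζ h = f ζ

end BSeq

open Classical in
noncomputable def rightBranch (B : Set BSeq) : Ordinal.{0} → Bool :=
  Ordinal.lt_wf.fix fun η branch => decide (∃ t ∈ B, ∃ h : η < t.len,
    (∀ ζ (hζ : ζ < η), t.val ζ (hζ.trans h) = branch ζ hζ) ∧ t.val η h = true)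

def branchWitnesses (B : Set BSeq) (η : Ordinal.{0}) : Set BSeq :=
  {t ∈ B | ∃ h : η < t.len, t.AgreesBelow (rightBranch B) η ∧ t.val η h = true}

theorem rightBranch_eq_true_iff (B : Set BSeq) (η : Ordinal.{0}) :
    rightBranch B η = true ↔ (branchWitnesses B η).Nonempty := by
  rw [rightBranch, WellFounded.fix_eq]
  simp only [decide_eq_true_eq]
  refine exists_congr fun t => and_congr_right fun _ => exists_congr fun h => and_congr_left' ?_
  exact ⟨fun hagree ζ _ hζ => hagree ζ hζ, fun hagree ζ hζ => hagree ζ (hζ.trans h) hζ⟩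

theorem exists_lexLE_branchWitness {B : Set BSeq} {s : BSeq} (hs : s ∈ B)
    (hne : ¬ s.AgreesBelow (rightBranch B) s.len) :
    ∃ η < s.len, (branchWitnesses B η).Nonempty ∧ ∀ r ∈ branchWitnesses B η, s.lexLE r := by
  obtain ⟨η, ⟨hηs, hsη⟩, hmin⟩ := Ordinal.lt_wf.has_min
    {η | ∃ h : η < s.len, s.val η h ≠ rightBranch B η} (by
      simp only [BSeq.AgreesBelow, not_forall] at hne
      obtain ⟨η, h, -, hη⟩ := hne
      exact ⟨η, h, hη⟩)
  have hagree : s.AgreesBelow (rightBranch B) η := fun ζ hζs hζ => by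
    by_contra hζne
    exact hmin ζ ⟨hζs, hζne⟩ hζ
  -- `s` itself would witness `rightBranch B η = true` if it turned right at `η`.
  have hsη_false : s.val η hηs = false := by
    by_contra hsη_true
    rw [Bool.not_eq_false] at hsη_true
    have hbranch : rightBranch B η = true :=
      (rightBranch_eq_true_iff B η).2 ⟨s, hs, hηs, hagree, hsη_true⟩
    exact hsη (hsη_true.trans hbranch.symm)
  have hbranch : rightBranch B η = true := by
    rw [hsη_false] at hsη
    exact Bool.eq_true_of_not_eq_false (Ne.symm hsη)
  refine ⟨η, hηs, (rightBranch_eq_true_iff B η).1 hbranch, fun r ⟨_, hηr, hr_agree, hrη⟩ =>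
    BSeq.lexLE_of_val_false_true hηs hηr (fun ζ hζs hζr hζ => ?_) hsη_false hrη⟩
  rw [hagree ζ hζs hζ, hr_agree ζ hζr hζ]

theorem exists_countable_lexLE_cofinal_of_len_eq {B : Set BSeq} {ξ : Ordinal.{0}}
    (hξ : ξ.card ≤ aleph0) (hB : ∀ s ∈ B, s.len = ξ) :
    ∃ B' ⊆ B, B'.Countable ∧ ∀ s ∈ B, ∃ r ∈ B', s.lexLE r := by
  classical
  let onBranch : Set BSeq := {s ∈ B | s.AgreesBelow (rightBranch B) s.len}
  let chosen (η : Ordinal.{0}) : Set BSeq :=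
    if h : (branchWitnesses B η).Nonempty then {h.some} else ∅
  have chosen_subset (η : Ordinal.{0}) : chosen η ⊆ branchWitnesses B η := by
    unfold chosen
    split_ifs with h
    · exact Set.singleton_subset_iff.2 h.some_mem
    · exact Set.empty_subset _
  have onBranch_subsingleton : onBranch.Subsingleton := fun s hs t ht =>
    BSeq.ext_of_len_eq ((hB s hs.1).trans (hB t ht.1).symm) fun η hηs hηt =>
      (hs.2 η hηs hηs).trans (ht.2 η hηt hηt).symm
  have Iio_countable : (Set.Iio ξ).Countable := by
    rwa [← Cardinal.le_aleph0_iff_set_countable, Cardinal.mk_Iio_ordinal, Cardinal.lift_le_aleph0]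
  refine ⟨onBranch ∪ ⋃ η ∈ Set.Iio ξ, chosen η, ?_, ?_, ?_⟩
  · exact Set.union_subset (Set.sep_subset _ _)
      (Set.iUnion₂_subset fun η _ => (chosen_subset η).trans (Set.sep_subset _ _))
  · refine onBranch_subsingleton.countable.union (Iio_countable.biUnion fun η _ => ?_)
    by_cases h : (branchWitnesses B η).Nonempty <;> simp [chosen, h]
  · intro s hs
    by_cases hagree : s.AgreesBelow (rightBranch B) s.len
    · exact ⟨s, Or.inl ⟨hs, hagree⟩, Or.inl rfl⟩
    obtain ⟨η, hηs, hwit, hs_le⟩ := exists_lexLE_branchWitness hs hagree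
    refine ⟨hwit.some, Or.inr (Set.mem_biUnion (hB s hs ▸ hηs) ?_), hs_le _ hwit.some_mem⟩
    simp [chosen, hwit]

theorem antichain_countably_cofinal_of_level_cofinal_general (A : Set BSeq)
    (ξ₀ : Ordinal) (hξ₀ : ξ₀.card ≤ aleph0)
    (hcof : ∀ t ∈ A, ∃ s ∈ A, s.len = ξ₀ ∧ t.lexLE s) :
    ∃ A' ⊆ A, A'.Countable ∧ ∀ t ∈ A, ∃ s ∈ A', t.lexLE s := by
  obtain ⟨A', hA'A, hA'_countable, hA'_cofinal⟩ :=
    exists_countable_lexLE_cofinal_of_len_eq (B := {s ∈ A | s.len = ξ₀}) hξ₀ fun _ hs => hs.2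
  refine ⟨A', fun s hs => (hA'A hs).1, hA'_countable, fun t ht => ?_⟩
  obtain ⟨s, hsA, hslen, hts⟩ := hcof t ht
  obtain ⟨r, hr, hsr⟩ := hA'_cofinal s ⟨hsA, hslen⟩
  exact ⟨r, hr, BSeq.lexLE_trans hts hsr⟩

/-- If `A ⊆ 2^{<ω₁}` is an antichain and, for some fixed countable ordinal `ξ₀`,
`A ∩ 2^{ξ₀}` is `≤lex`-cofinal in `A`, then `A` is countably cofinal under `≤lex`. -/
theorem antichain_countably_cofinal_of_level_cofinal (A : Set BSeq) (hA : IsSeqAntichain A)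
    (ξ₀ : Ordinal) (hξ₀ : ξ₀.card ≤ aleph0)
    (hcof : ∀ t ∈ A, ∃ s ∈ A, s.len = ξ₀ ∧ t.lexLE s) :
    ∃ A' ⊆ A, A'.Countable ∧ ∀ t ∈ A, ∃ s ∈ A', t.lexLE s :=
  antichain_countably_cofinal_of_level_cofinal_general A ξ₀ hξ₀ hcof
end

section
/- With rank as above, the relation x ≼ y ↔ rank(x) ≤ rank(y) is a linear quasi-order (reflexive, transitive, total) on ℕ^ℕ that has cofinality ω₁: there is no countable subset Y ⊆ ℕ^ℕ such that every x satisfies x ≼ y for some y ∈ Y. -/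
open Cardinal Ordinal

/-- The set `Q_x = {q_k : x(k) = 0}` of rationals coded by `x ∈ ℕ^ℕ`,
relative to a fixed enumeration `q` of `ℚ`. -/
def Qset (q : ℕ → ℚ) (x : ℕ → ℕ) : Set ℚ := {r | ∃ k, x k = 0 ∧ q k = r}

/-- The maximal well-ordered initial segment of `Q_x`: the set of `r ∈ Q_x` whose set of
`≤`-predecessors within `Q_x` is well-founded under `<`. -/
def maxWO (q : ℕ → ℚ) (x : ℕ → ℕ) : Set ℚ :=
  {r ∈ Qset q x | ({r' ∈ Qset q x | r' ≤ r}).WellFoundedOn (· < ·)}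

/-!
Every rank is countable, since `maxWO q x ⊆ ℚ`, and conversely every countable well-order
embeds into `ℚ` as some set `S`, which is `Q_x` for the code `x` of `S` and is then its own
maximal well-ordered initial segment. So the ranks are exactly the countable ordinals, and
`ω₁` has uncountable cofinality: the supremum of countably many ranks is still countable, and
its successor is a rank that no member of a countable family dominates.
-/

open Set

theorem Ordinal.lt_omega_one_iff_countable_toType {o : Ordinal} :
    o < ω₁ ↔ Countable o.ToType := by
  rw [lt_omega_iff_card_lt, lt_aleph_one_iff, ← mk_toType, mk_le_aleph0_iff]

theorem Ordinal.not_exists_countable_cofinal_of_range_eq_Iio_omega_one {α : Type*}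
    {f : α → Ordinal} (hf : range f = Iio ω₁) :
    ¬ ∃ Y : Set α, Y.Countable ∧ ∀ x, ∃ y ∈ Y, f x ≤ f y := by
  rintro ⟨Y, hY, hcof⟩
  have := hY.to_subtype
  set σ := ⨆ y : Y, f y
  have hσ : σ < ω₁ := iSup_lt_omega_one fun y => hf.subset (mem_range_self _)
  obtain ⟨x, hx⟩ : Order.succ σ ∈ range f := hf.symm.subset ((isSuccLimit_omega 1).succ_lt hσ)
  obtain ⟨y, hy, hxy⟩ := hcof x
  have hyσ : f y ≤ σ := Ordinal.le_iSup (fun y : Y => f y) ⟨y, hy⟩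
  exact (Order.lt_succ σ).not_ge (hx ▸ hxy.trans hyσ)

open Classical in
noncomputable def codeOf (q : ℕ → ℚ) (S : Set ℚ) (k : ℕ) : ℕ := if q k ∈ S then 0 else 1

section Coding

variable {q : ℕ → ℚ}

theorem Qset_codeOf (hq : Function.Surjective q) (S : Set ℚ) : Qset q (codeOf q S) = S := by
  ext r
  refine ⟨?_, fun hr => ?_⟩
  · rintro ⟨k, hk, rfl⟩
    by_contra hkS
    simp [codeOf, hkS] at hk
  · obtain ⟨k, rfl⟩ := hq r
    exact ⟨k, if_pos hr, rfl⟩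

theorem maxWO_subset_Qset (x : ℕ → ℕ) : maxWO q x ⊆ Qset q x := fun _ hr => hr.1

theorem maxWO_eq_Qset_of_wellFoundedOn {x : ℕ → ℕ} (h : (Qset q x).WellFoundedOn (· < ·)) :
    maxWO q x = Qset q x :=
  (maxWO_subset_Qset x).antisymm fun _ hr => ⟨hr, h.subset fun _ hr' => hr'.1⟩

theorem exists_orderIso_maxWO (hq : Function.Surjective q) (α : Type*) [LinearOrder α]
    [WellFoundedLT α] [Countable α] : ∃ x, Nonempty (α ≃o maxWO q x) := by
  obtain ⟨f⟩ := Order.embedding_from_countable_to_dense (α := α) (β := ℚ)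
  have hwf : (range f).WellFoundedOn (· < ·) := by
    rw [wellFoundedOn_range]
    exact wellFounded_lt.mono fun _ _ => f.lt_iff_lt.1
  refine ⟨codeOf q (range f), ⟨f.orderIso.trans (OrderIso.setCongr _ _ ?_)⟩⟩
  rw [maxWO_eq_Qset_of_wellFoundedOn (by rwa [Qset_codeOf hq]), Qset_codeOf hq]

end Coding

theorem range_rank_eq_Iio_omega_one {q : ℕ → ℚ} (hq : Function.Surjective q)
    {rank : (ℕ → ℕ) → Ordinal} (hrank : ∀ x, Nonempty ((rank x).ToType ≃o ↥(maxWO q x))) :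
    range rank = Iio ω₁ := by
  ext o
  refine ⟨?_, fun ho => ?_⟩
  · rintro ⟨x, rfl⟩
    obtain ⟨e⟩ := hrank x
    exact lt_omega_one_iff_countable_toType.2 (e.toEquiv.countable_iff.2 inferInstance)
  · have := lt_omega_one_iff_countable_toType.1 ho
    obtain ⟨x, ⟨e⟩⟩ := exists_orderIso_maxWO hq o.ToType
    obtain ⟨e'⟩ := hrank x
    refine ⟨x, ?_⟩
    rw [← type_toType (rank x), ← type_toType o]
    exact (e'.trans e.symm).ordinalType_congr

/-- The relation `x ≼ y ↔ rank x ≤ rank y` is a linear quasi-order on `ℕ^ℕ` of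
cofinality `ω₁`: no countable `Y ⊆ ℕ^ℕ` is `≼`-cofinal. -/
theorem rank_preorder_uncountably_cofinal (q : ℕ → ℚ) (hq : Function.Bijective q)
    (rank : (ℕ → ℕ) → Ordinal)
    (hrank : ∀ x, Nonempty ((rank x).ToType ≃o ↥(maxWO q x))) :
    (∀ x : ℕ → ℕ, rank x ≤ rank x) ∧
    (∀ x y z : ℕ → ℕ, rank x ≤ rank y → rank y ≤ rank z → rank x ≤ rank z) ∧
    (∀ x y : ℕ → ℕ, rank x ≤ rank y ∨ rank y ≤ rank x) ∧
    ¬ ∃ Y : Set (ℕ → ℕ), Y.Countable ∧ ∀ x : ℕ → ℕ, ∃ y ∈ Y, rank x ≤ rank y :=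
  ⟨fun _ => le_rfl, fun _ _ _ => le_trans, fun _ _ => le_total _ _,
    not_exists_countable_cofinal_of_range_eq_Iio_omega_one
      (range_rank_eq_Iio_omega_one hq.surjective hrank)⟩
end

section
/- If A ⊆ 2^{<ω₁} is an antichain linearly ordered by ≤_lex and A is not countably cofinal (no countable subset is ≤_lex-cofinal in A), then for every countable ordinal η there exist ξ > η and s ∈ A ∩ 2^ξ with t <_lex s for all t ∈ A ∩ 2^η. -/
open Cardinal Ordinal

namespace BSeq

/-- Pad a `BSeq` with `false` beyond its length. -/
noncomputable def pad (s : BSeq) (β : Ordinal) : Bool :=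
  if h : β < s.len then s.val β h else false

lemma pad_eq (s : BSeq) {β : Ordinal} (h : β < s.len) : s.pad β = s.val β h := dif_pos h

lemma pad_eq_false (s : BSeq) {β : Ordinal} (h : ¬ β < s.len) : s.pad β = false := dif_neg h

lemma ext' {s t : BSeq} (hlen : s.len = t.len) (h : ∀ β, s.pad β = t.pad β) : s = t := by
  cases s with
  | mk ls hs vs =>
    cases t with
    | mk lt ht vt =>
      simp only at hlen
      subst hlen
      simp only [mk.injEq, heq_eq_eq, true_and]
      funext β hβ
      have := h β
      rwa [pad_eq _ hβ, pad_eq _ hβ] at this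

lemma lexLE_refl (s : BSeq) : s.lexLE s := Or.inl rfl

lemma not_extendedBy_of_len_eq {s t : BSeq} (h : s.len = t.len) : ¬ s.ExtendedBy t := by
  rintro ⟨hlt, -⟩
  exact absurd (h ▸ hlt) (lt_irrefl _)

lemma lexLE_trans_s15 {s t u : BSeq} (hst : s.lexLE t) (htu : t.lexLE u)
    (h1 : ¬ s.ExtendedBy u) (h2 : ¬ u.ExtendedBy s) : s.lexLE u := by
  rcases hst with rfl | ⟨-, -, η1, h1s, h1t, hagr1, hsv1, htv1⟩
  · exact htu
  rcases htu with rfl | ⟨-, -, η2, h2t, h2u, hagr2, htv2, huv2⟩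
  · exact Or.inr ⟨h1, h2, η1, h1s, h1t, hagr1, hsv1, htv1⟩
  rcases lt_trichotomy η1 η2 with hlt | heq | hlt
  · refine Or.inr ⟨h1, h2, η1, h1s, hlt.trans h2u, ?_, hsv1, ?_⟩
    · intro ζ hζs hζu hζ
      rw [hagr1 ζ hζs (hζ.trans h1t) hζ, hagr2 ζ (hζ.trans h1t) hζu (hζ.trans hlt)]
    · rw [← hagr2 η1 h1t (hlt.trans h2u) hlt]
      exact htv1
  · subst heq
    exact absurd (htv1.symm.trans htv2) (by simp)
  · refine Or.inr ⟨h1, h2, η2, hlt.trans h1s, h2u, ?_, ?_, huv2⟩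
    · intro ζ hζs hζu hζ
      rw [hagr1 ζ hζs (hζ.trans h2t) (hζ.trans hlt), hagr2 ζ (hζ.trans h2t) hζu hζ]
    · rw [hagr1 η2 (hlt.trans h1s) h2t hlt]
      exact htv2

end BSeq

open Classical in
/-- The "greedy supremum" sequence of a set of `BSeq`s. -/
noncomputable def supSeq (S : Set BSeq) : Ordinal → Bool :=
  Ordinal.lt_wf.fix fun γ ih =>
    if (∃ s ∈ S, (∀ β (h : β < γ), s.pad β = ih β h) ∧ s.pad γ = true) then true else false

open Classical in
lemma supSeq_eq (S : Set BSeq) (γ : Ordinal) :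
    supSeq S γ =
      if (∃ s ∈ S, (∀ β (_ : β < γ), s.pad β = supSeq S β) ∧ s.pad γ = true) then true
      else false :=
  Ordinal.lt_wf.fix_eq _ γ

/-- The set of elements of `S` agreeing with the greedy supremum below `γ`. -/
def agreeSet (S : Set BSeq) (γ : Ordinal) : Set BSeq :=
  {s ∈ S | ∀ β, β < γ → s.pad β = supSeq S β}

lemma key_step {S : Set BSeq} {γ : Ordinal} {t : BSeq} (ht : t ∈ agreeSet S γ)
    (hne : t.pad γ ≠ supSeq S γ) :
    supSeq S γ = true ∧ t.pad γ = false ∧ (agreeSet S (γ + 1)).Nonempty := by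
  classical
  have hpadf : t.pad γ = false := by
    by_contra hpt
    have hpt' : t.pad γ = true := by
      cases h : t.pad γ
      · exact absurd h hpt
      · rfl
    have : supSeq S γ = true := by
      rw [supSeq_eq]
      rw [if_pos ⟨t, ht.1, fun β h => ht.2 β h, hpt'⟩]
    exact hne (hpt'.trans this.symm)
  have hsup : supSeq S γ = true := by
    cases h : supSeq S γ
    · exact absurd (hpadf.trans h.symm) hne
    · rfl
  refine ⟨hsup, hpadf, ?_⟩
  rw [supSeq_eq] at hsup
  by_cases hc : (∃ s ∈ S, (∀ β (_ : β < γ), s.pad β = supSeq S β) ∧ s.pad γ = true)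
  · obtain ⟨s, hsS, hagr, hsγ⟩ := hc
    refine ⟨s, hsS, fun β hβ => ?_⟩
    rcases lt_or_eq_of_le (Order.lt_add_one_iff.mp hβ) with hβγ | rfl
    · exact hagr β hβγ
    · rw [hsγ, supSeq_eq, if_pos ⟨s, hsS, hagr, hsγ⟩]
  · rw [if_neg hc] at hsup
    exact absurd hsup (by simp)

lemma countable_Iic {η : Ordinal.{0}} (hη : η.card ≤ Cardinal.aleph0) :
    (Set.Iic η).Countable := by
  have h1 : (Set.Iio (η + 1)).Countable := by
    rw [← Set.countable_coe_iff, ← Cardinal.mk_le_aleph0_iff, Ordinal.mk_Iio_ordinal,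
      ← Cardinal.lift_aleph0.{1, 0}, Cardinal.lift_le, Ordinal.add_one_eq_succ,
      Ordinal.card_succ]
    exact Cardinal.add_le_aleph0.mpr ⟨hη, Cardinal.one_le_aleph0⟩
  exact h1.mono fun x hx => lt_of_le_of_lt hx (lt_add_one η)

lemma exists_countable_cofinal (η : Ordinal.{0}) (hη : η.card ≤ Cardinal.aleph0)
    (S : Set BSeq) (hS : ∀ s ∈ S, s.len = η) :
    ∃ C ⊆ S, C.Countable ∧ ∀ t ∈ S, ∃ c ∈ C, t.lexLE c := by
  classical
  set C : Set BSeq :=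
    ⋃ γ ∈ Set.Iic η, {x | ∃ h : (agreeSet S γ).Nonempty, x = h.some} with hC
  have hmem : ∀ γ, γ ≤ η → ∀ (h : (agreeSet S γ).Nonempty), h.some ∈ C := by
    intro γ hγ h
    exact Set.mem_biUnion hγ ⟨h, rfl⟩
  have hCS : C ⊆ S := by
    rintro x hx
    simp only [hC, Set.mem_iUnion] at hx
    obtain ⟨γ, -, h, rfl⟩ := hx
    exact h.some_mem.1
  refine ⟨C, hCS, ?_, ?_⟩
  · refine Set.Countable.biUnion (countable_Iic hη) fun γ _ => ?_
    apply Set.Subsingleton.countable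
    rintro x ⟨h, rfl⟩ y ⟨h', rfl⟩
    rfl
  · intro t htS
    have htlen := hS t htS
    by_cases hD : ∃ β, β < η ∧ t.pad β ≠ supSeq S β
    · -- least disagreement point
      obtain ⟨γ, ⟨hγη, hγne⟩, hmin⟩ :=
        Ordinal.lt_wf.has_min {β | β < η ∧ t.pad β ≠ supSeq S β} hD
      have htγ : t ∈ agreeSet S γ := by
        refine ⟨htS, fun β hβ => ?_⟩
        by_contra hne
        exact hmin β ⟨hβ.trans hγη, hne⟩ hβ
      obtain ⟨hsup, hpadf, hne'⟩ := key_step htγ hγne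
      have hγ1 : γ + 1 ≤ η := Order.add_one_le_iff.mpr hγη
      refine ⟨hne'.some, hmem _ hγ1 hne', ?_⟩
      have hc := hne'.some_mem
      set c := hne'.some with hcdef
      have hclen := hS c hc.1
      refine Or.inr ⟨BSeq.not_extendedBy_of_len_eq (htlen.trans hclen.symm),
        BSeq.not_extendedBy_of_len_eq (hclen.trans htlen.symm), γ,
        (show γ < t.len by rwa [htlen]), (show γ < c.len by rwa [hclen]), ?_, ?_, ?_⟩
      · intro ζ hζt hζc hζγ
        have h1 : t.pad ζ = supSeq S ζ := htγ.2 ζ hζγ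
        have h2 : c.pad ζ = supSeq S ζ := hc.2 ζ (hζγ.trans (lt_add_one γ))
        rw [← BSeq.pad_eq t hζt, ← BSeq.pad_eq c hζc, h1, h2]
      · rw [← BSeq.pad_eq t (show γ < t.len by rwa [htlen])]
        exact hpadf
      · rw [← BSeq.pad_eq c (show γ < c.len by rwa [hclen])]
        rw [hc.2 γ (lt_add_one γ)]
        exact hsup
    · -- t agrees with supSeq everywhere below η
      push_neg at hD
      have htη : t ∈ agreeSet S η := ⟨htS, fun β hβ => hD β hβ⟩
      have hne' : (agreeSet S η).Nonempty := ⟨t, htη⟩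
      refine ⟨hne'.some, hmem _ le_rfl hne', Or.inl ?_⟩
      have hc := hne'.some_mem
      have hclen := hS _ hc.1
      refine BSeq.ext' (htlen.trans hclen.symm) fun β => ?_
      by_cases hβ : β < η
      · rw [htη.2 β hβ, hc.2 β hβ]
      · rw [BSeq.pad_eq_false t (by rwa [htlen]), BSeq.pad_eq_false _ (by rwa [hclen])]

/-- If `A ⊆ 2^{<ω₁}` is an antichain linearly ordered by `≤lex` and `A` is not countably
cofinal, then for every countable ordinal `η` there exist `ξ > η` and `s ∈ A ∩ 2^ξ`
with `t <lex s` for all `t ∈ A ∩ 2^η`. -/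
theorem exists_strict_bound_of_not_countably_cofinal (A : Set BSeq) (hA : IsSeqAntichain A)
    (hlin : ∀ s ∈ A, ∀ t ∈ A, s.lexLE t ∨ t.lexLE s)
    (hnc : ¬ ∃ A' ⊆ A, A'.Countable ∧ ∀ t ∈ A, ∃ s ∈ A', t.lexLE s) :
    ∀ η : Ordinal, η.card ≤ aleph0 →
      ∃ ξ : Ordinal, η < ξ ∧ ∃ s ∈ A, s.len = ξ ∧ ∀ t ∈ A, t.len = η → t.lexLT s := by
  intro η hη
  have H : ∀ ζ : Set.Iic η, ∃ C ⊆ {s ∈ A | s.len = (ζ : Ordinal)},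
      C.Countable ∧ ∀ t ∈ {s ∈ A | s.len = (ζ : Ordinal)}, ∃ c ∈ C, t.lexLE c := fun ζ =>
    exists_countable_cofinal ζ ((Ordinal.card_le_card ζ.2).trans hη) _ fun s hs => hs.2
  choose F hF1 hF2 hF3 using H
  have : Countable (Set.Iic η) := (countable_Iic hη).to_subtype
  set C : Set BSeq := ⋃ ζ : Set.Iic η, F ζ with hCdef
  have hCA : C ⊆ A := Set.iUnion_subset fun ζ x hx => (hF1 ζ hx).1
  have hCc : C.Countable := Set.countable_iUnion hF2
  push_neg at hnc
  obtain ⟨s₀, hs₀A, hs₀⟩ := hnc C hCA hCc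
  have hlen : η < s₀.len := by
    by_contra hle
    push_neg at hle
    obtain ⟨c, hcF, hcle⟩ := hF3 ⟨s₀.len, Set.mem_Iic.mpr hle⟩ s₀ ⟨hs₀A, rfl⟩
    exact hs₀ c (Set.mem_iUnion.mpr ⟨⟨s₀.len, Set.mem_Iic.mpr hle⟩, hcF⟩) hcle
  refine ⟨s₀.len, hlen, s₀, hs₀A, rfl, fun t htA htlen => ?_⟩
  obtain ⟨c, hcF, hcle⟩ := hF3 ⟨η, Set.self_mem_Iic⟩ t ⟨htA, htlen⟩
  have hcC : c ∈ C := Set.mem_iUnion.mpr ⟨⟨η, Set.self_mem_Iic⟩, hcF⟩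
  have hcA : c ∈ A := hCA hcC
  have hcs : c.lexLE s₀ := (hlin s₀ hs₀A c hcA).resolve_left (hs₀ c hcC)
  refine ⟨BSeq.lexLE_trans_s15 hcle hcs (hA t htA s₀ hs₀A) (hA s₀ hs₀A t htA), fun h => ?_⟩
  subst h
  exact absurd htlen (ne_of_gt hlen)
end
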